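/- Under the hypotheses of the previous conservation law (m_t + v^p m_x + (a/p)(v^p)_x m = 0 with flow φ, ∂_x φ > 0, φ(t,·) a diffeomorphism of ℝ), if a ≠ 0 and ∫_ℝ |m(0,x)|^{p/a} dx < ∞, then for every t ∈ [0,T), ∫_ℝ |m(t,x)|^{p/a} dx = ∫_ℝ |m(0,x)|^{p/a} dx. -/

import Mathlib

open MeasureTheory

theorem integral_eq_integral_abs_deriv_smul_comp {E : Type*} [NormedAddCommGroup E]
    [NormedSpace ℝ E] {f f' : ℝ → ℝ} (hf : ∀ x, HasDerivAt f (f' x) x)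
    (hbij : Function.Bijective f) (g : ℝ → E) :
    ∫ y, g y = ∫ x, |f' x| • g (f x) := by
  have h := integral_image_eq_integral_abs_deriv_smul MeasurableSet.univ
    (fun x _ => (hf x).hasDerivWithinAt) hbij.1.injOn g
  rwa [Set.image_univ_of_surjective hbij.2, setIntegral_univ, setIntegral_univ] at h

theorem mul_abs_rpow_eq_abs_mul_rpow_rpow {J u r q : ℝ} (hJ : 0 < J) (hrq : r * q = 1) :
    J * |u| ^ q = |u * J ^ r| ^ q := by
  rw [abs_mul, abs_of_pos (Real.rpow_pos_of_pos hJ r),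
    Real.mul_rpow (abs_nonneg u) (Real.rpow_nonneg hJ.le r), ← Real.rpow_mul hJ.le, hrq,
    Real.rpow_one, mul_comm]

theorem stmt16_general (T : ℝ) (p : ℕ) (hp : 1 ≤ p) (a : ℝ) (ha : a ≠ 0)
    (m : ℝ → ℝ → ℝ) (φ φx : ℝ → ℝ → ℝ)
    (hcons : ∀ t ∈ Set.Ico (0:ℝ) T, ∀ x,
      m t (φ t x) * (φx t x) ^ (a / (p:ℝ)) = m 0 x)
    (hφx : ∀ t ∈ Set.Ico (0:ℝ) T, ∀ x, HasDerivAt (fun y => φ t y) (φx t x) x)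
    (hφxpos : ∀ t ∈ Set.Ico (0:ℝ) T, ∀ x, 0 < φx t x)
    (hbij : ∀ t ∈ Set.Ico (0:ℝ) T, Function.Bijective (fun x => φ t x)) :
    ∀ t ∈ Set.Ico (0:ℝ) T,
      ∫ x : ℝ, |m t x| ^ ((p:ℝ) / a) = ∫ x : ℝ, |m 0 x| ^ ((p:ℝ) / a) := by
  intro t ht
  have hp0 : (p : ℝ) ≠ 0 := by exact_mod_cast (Nat.one_le_iff_ne_zero.mp hp)
  have hexp : a / p * (p / a) = 1 := by field_simp
  rw [integral_eq_integral_abs_deriv_smul_comp (hφx t ht) (hbij t ht)]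
  congr 1 with x
  simp only [smul_eq_mul, abs_of_pos (hφxpos t ht x),
    mul_abs_rpow_eq_abs_mul_rpow_rpow (hφxpos t ht x) hexp, hcons t ht x]

/-- Conservation of the `L^{p/a}`-norm of the momentum along the flow:
from `m(t, φ(t,x)) (∂_x φ)^{a/p} = m(0,x)` and `φ(t,·)` a diffeomorphism,
`∫ |m(t,x)|^{p/a} dx = ∫ |m(0,x)|^{p/a} dx`. -/
theorem stmt16 (T : ℝ) (hT : 0 < T) (p : ℕ) (hp : 1 ≤ p) (a : ℝ) (ha : a ≠ 0)
    (m : ℝ → ℝ → ℝ) (φ φx : ℝ → ℝ → ℝ)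
    (hm_meas : ∀ t, Measurable (m t))
    (hcons : ∀ t ∈ Set.Ico (0:ℝ) T, ∀ x,
      m t (φ t x) * (φx t x) ^ (a / (p:ℝ)) = m 0 x)
    (hφ0 : ∀ x, φ 0 x = x)
    (hφx : ∀ t ∈ Set.Ico (0:ℝ) T, ∀ x, HasDerivAt (fun y => φ t y) (φx t x) x)
    (hφxpos : ∀ t ∈ Set.Ico (0:ℝ) T, ∀ x, 0 < φx t x)
    (hbij : ∀ t ∈ Set.Ico (0:ℝ) T, Function.Bijective (fun x => φ t x))
    (hint : Integrable (fun x => |m 0 x| ^ ((p:ℝ) / a))) :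
    ∀ t ∈ Set.Ico (0:ℝ) T,
      ∫ x : ℝ, |m t x| ^ ((p:ℝ) / a) = ∫ x : ℝ, |m 0 x| ^ ((p:ℝ) / a) :=
  stmt16_general T p hp a ha m φ φx hcons hφx hφxpos hbij
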